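/- In the trace decomposition of a rank-3 tensor, the vector φ is given explicitly by φ_i = √N (N²+N−2)^{-1} (−T_{aai} + (N+1) T_{aia} − T_{iaa}) (summing over a). -/

import Mathlib

abbrev Tens (N : ℕ) := Fin N → Fin N → Fin N → ℝ

noncomputable def ip {N : ℕ} (T U : Tens N) : ℝ := ∑ a, ∑ b, ∑ c, T a b c * U a b c

noncomputable def kd {N : ℕ} (i j : Fin N) : ℝ := if i = j then 1 else 0

/-- A rank-3 tensor is completely traceless if all three of its traces vanish. -/
def Traceless {N : ℕ} (T : Tens N) : Prop :=
  ∀ b : Fin N, (∑ a, T a a b = 0) ∧ (∑ a, T a b a = 0) ∧ (∑ a, T b a a = 0)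

/-!
Taking the three traces of the decomposition kills `T⁰` and, since `∑ₐ δₐₐ = N`, gives
`√N ∑ₐ T_{aai} = χᵢ + φᵢ + N ψᵢ`, `√N ∑ₐ T_{aia} = χᵢ + N φᵢ + ψᵢ`, `√N ∑ₐ T_{iaa} = N χᵢ + φᵢ + ψᵢ`.
The combination `-1, N + 1, -1` of these eliminates `χ` and `ψ` and leaves `(N² + N - 2) φᵢ`,
and `N² + N - 2 = (N - 1)(N + 2)` is nonzero for `N ≥ 2`.
-/

section KroneckerDelta

variable {N : ℕ}

lemma sum_mul_kd_left (f : Fin N → ℝ) (i : Fin N) : ∑ a, f a * kd a i = f i := by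
  simp [kd]

lemma sum_mul_kd_right (f : Fin N → ℝ) (i : Fin N) : ∑ a, f a * kd i a = f i := by
  simp [kd]

lemma sum_kd_self : ∑ a : Fin N, kd a a = N := by
  simp [kd]

end KroneckerDelta

section TraceDecomposition

variable {N : ℕ} {T T0 : Tens N} {χ φ ψ : Fin N → ℝ} {c : ℝ}

lemma sum_T_aai_eq (hT0 : Traceless T0)
    (hdec : ∀ a1 a2 a3, T a1 a2 a3 =
      T0 a1 a2 a3 + c * (χ a1 * kd a2 a3 + φ a2 * kd a1 a3 + ψ a3 * kd a1 a2))
    (i : Fin N) : ∑ a, T a a i = c * (χ i + φ i + N * ψ i) := by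
  simp only [hdec, mul_add, Finset.sum_add_distrib, ← Finset.mul_sum, (hT0 i).1,
    sum_mul_kd_left, sum_kd_self]
  ring

lemma sum_T_aia_eq (hT0 : Traceless T0)
    (hdec : ∀ a1 a2 a3, T a1 a2 a3 =
      T0 a1 a2 a3 + c * (χ a1 * kd a2 a3 + φ a2 * kd a1 a3 + ψ a3 * kd a1 a2))
    (i : Fin N) : ∑ a, T a i a = c * (χ i + N * φ i + ψ i) := by
  simp only [hdec, mul_add, Finset.sum_add_distrib, ← Finset.mul_sum, (hT0 i).2.1,
    sum_mul_kd_left, sum_mul_kd_right, sum_kd_self]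
  ring

lemma sum_T_iaa_eq (hT0 : Traceless T0)
    (hdec : ∀ a1 a2 a3, T a1 a2 a3 =
      T0 a1 a2 a3 + c * (χ a1 * kd a2 a3 + φ a2 * kd a1 a3 + ψ a3 * kd a1 a2))
    (i : Fin N) : ∑ a, T i a a = c * (N * χ i + φ i + ψ i) := by
  simp only [hdec, mul_add, Finset.sum_add_distrib, ← Finset.mul_sum, (hT0 i).2.2,
    sum_mul_kd_right, sum_kd_self]
  ring

end TraceDecomposition

lemma eq_of_trace_system {n s χ φ ψ A B C : ℝ} (hs : s ≠ 0) (hn : n ^ 2 + n - 2 ≠ 0)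
    (hA : A = s⁻¹ * (χ + φ + n * ψ)) (hB : B = s⁻¹ * (χ + n * φ + ψ))
    (hC : C = s⁻¹ * (n * χ + φ + ψ)) :
    φ = s / (n ^ 2 + n - 2) * (-A + (n + 1) * B - C) := by
  have hcomb : -A + (n + 1) * B - C = s⁻¹ * (n ^ 2 + n - 2) * φ := by
    rw [hA, hB, hC]
    ring
  rw [hcomb]
  generalize n ^ 2 + n - 2 = d at hn ⊢
  field_simp

theorem phi_formula (N : ℕ) (hN : 2 ≤ N) (T T0 : Tens N)
    (χ φ ψ : Fin N → ℝ) (hT0 : Traceless T0)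
    (hdec : ∀ a1 a2 a3 : Fin N,
      T a1 a2 a3 = T0 a1 a2 a3 + (Real.sqrt N)⁻¹ *
        (χ a1 * kd a2 a3 + φ a2 * kd a1 a3 + ψ a3 * kd a1 a2)) :
    ∀ i : Fin N, φ i = Real.sqrt N / ((N : ℝ)^2 + N - 2) *
      (-(∑ a, T a a i) + ((N : ℝ) + 1) * (∑ a, T a i a) - ∑ a, T i a a) := by
  intro i
  have hN' : (2 : ℝ) ≤ N := by exact_mod_cast hN
  have hsqrt : Real.sqrt N ≠ 0 := by positivity
  have hdet : (N : ℝ) ^ 2 + N - 2 ≠ 0 := by nlinarith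
  exact eq_of_trace_system hsqrt hdet (sum_T_aai_eq hT0 hdec i) (sum_T_aia_eq hT0 hdec i)
    (sum_T_iaa_eq hT0 hdec i)
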